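/- Assume in addition condition (star): for every arrow α, n_α ≥ 4 or n_{f(α)} ≥ 4. Then for every arrow α, setting α' = g^{n_ᾱ−3}(ᾱ), q = c(f(α))·x(g²(f(α)))·x(g³(f(α)))⋯x(g^{n_{f(α)}−2}(f(α))) (a scalar multiple of a product of n_{f(α)}−3 factors, equal to c(f(α))·1 if n_{f(α)} = 3) and q' = c(ᾱ)·x(ᾱ)·x(g(ᾱ))⋯x(g^{n_ᾱ−4}(ᾱ)) (a scalar multiple of a product of n_ᾱ−3 factors, equal to c(ᾱ)·1 if n_ᾱ = 3), one has x(α)·x(g(α))·x(f(g(α))) = x(α)·x(f(α))·x(g(f(α)))·q and x(α)·x(f(α))·x(g(f(α))) = q'·x(α')·x(g(α'))·x(f(g(α'))), where the two products appearing in q and q' are not both of length zero, i.e. (n_ᾱ−3) + (n_{f(α)}−3) ≥ 1. -/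

import Mathlib

/-!
Out-degree two makes the arrow leaving `s δ` other than `δ` unique; this gives
`bar δ = g (f (f δ))` and `g⁻¹ (f β) = f (f (g β))`. The relation at `g⁻¹ (f α) = f (f (g α))`
expresses `x (g α) * x (f (g α))` as `c (f α)` times the `g`-path of length `n_{f α} - 1` from
`f α`; splitting off its first two factors gives the first identity. The relation at
`f (f α) = g⁻¹ (bar α)` expresses `x α * x (f α)` as `c (bar α)` times the path of length
`n_{bar α} - 1` from `bar α`, whose last arrow `g α'` satisfies `f (g α') = g (f α)`; this gives
the second. Since `n_{bar α} = n_{f (f α)}`, condition (star) at `f α` is the length bound, and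
the absence of loops and 2-cycles gives `n ≥ 3` everywhere.
-/

/-- The product `x α * x (g α) * ⋯ * x (g^[m-1] α)` of `m` factors along the `g`-orbit,
read left to right (the empty product for `m = 0` is `1`). -/
def gpath {Q₁ A : Type} [Ring A] (x : Q₁ → A) (g : Q₁ → Q₁) (α : Q₁) (m : ℕ) : A :=
  ((List.range m).map fun i => x (g^[i] α)).prod

open Function Finset

section Gpath

variable {Q₁ A : Type} [Ring A] (x : Q₁ → A) (g : Q₁ → Q₁) (α : Q₁)

theorem gpath_succ (m : ℕ) : gpath x g α (m + 1) = gpath x g α m * x (g^[m] α) :=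
  List.prod_range_succ _ m

theorem gpath_succ' (m : ℕ) : gpath x g α (m + 1) = x α * gpath x g (g α) m := by
  simp only [gpath, List.prod_range_succ', iterate_succ_apply, iterate_zero_apply]

theorem gpath_add_two (m : ℕ) :
    gpath x g α (m + 2) = gpath x g α m * x (g^[m] α) * x (g (g^[m] α)) := by
  rw [gpath_succ, gpath_succ, iterate_succ_apply']

theorem gpath_add_two' (m : ℕ) :
    gpath x g α (m + 2) = x α * x (g α) * gpath x g (g^[2] α) m := by
  rw [gpath_succ', gpath_succ', mul_assoc]
  rfl

end Gpath

theorem Equiv.iterate_minimalPeriod_sub_apply {α : Type*} (g : α ≃ α) (a : α) {k : ℕ}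
    (hk : k ≤ minimalPeriod g a) : (⇑g)^[minimalPeriod g a - k] a = (⇑g.symm)^[k] a := by
  apply g.injective.iterate k
  rw [← iterate_add_apply, Nat.add_sub_cancel' hk, iterate_minimalPeriod,
    RightInverse.iterate g.apply_symm_apply k a]

theorem three_le_minimalPeriod {α : Type*} {f : α → α} {a : α} (ha : a ∈ periodicPts f)
    (h₁ : f a ≠ a) (h₂ : f (f a) ≠ a) : 3 ≤ minimalPeriod f a := by
  have hpos := minimalPeriod_pos_of_mem_periodicPts ha
  have hper : f^[minimalPeriod f a] a = a := iterate_minimalPeriod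
  by_contra! hlt
  interval_cases h : minimalPeriod f a
  · exact h₁ hper
  · exact h₂ hper

theorem eq_of_source_eq_of_ne {ι V : Type*} [Fintype ι] [DecidableEq V] {s : ι → V}
    {δ a b : ι} (hdeg : #(univ.filter fun e => s e = s δ) ≤ 2)
    (ha : s a = s δ) (hb : s b = s δ) (haδ : a ≠ δ) (hbδ : b ≠ δ) : a = b := by
  by_contra hab
  refine hdeg.not_gt (two_lt_card.2 ⟨δ, ?_, a, ?_, b, ?_, haδ.symm, hbδ.symm, hab⟩) <;>
    simp [ha, hb]

section AdjacencyQuiver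

variable {Q₀ Q₁ : Type} [Fintype Q₁] {s t : Q₁ → Q₀} {f g : Q₁ ≃ Q₁}

theorem three_le_minimalPeriod_of_no_short_cycles (hnoloop : ∀ e, s e ≠ t e)
    (hno2cyc : ∀ e e', ¬ (s e = t e' ∧ t e = s e')) (hsg : ∀ α, s (g α) = t α) (α : Q₁) :
    3 ≤ minimalPeriod g α :=
  three_le_minimalPeriod (g.injective.mem_periodicPts α)
    (fun h => hnoloop α (by rw [← hsg, h]))
    (fun h => hno2cyc α (g α) ⟨by rw [← hsg, h], (hsg α).symm⟩)

/-- `f β` and `g (f (f (g β)))` are both arrows out of `t β` distinct from `g β`. -/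
theorem g_symm_apply_f [DecidableEq Q₀] (hout : ∀ v, #(univ.filter fun e => s e = v) = 2)
    (hfg : ∀ α, f α ≠ g α) (hsf : ∀ α, s (f α) = t α) (hsg : ∀ α, s (g α) = t α)
    (hf3 : ∀ α, f (f (f α)) = α) (β : Q₁) : g.symm (f β) = f (f (g β)) := by
  rw [Equiv.symm_apply_eq]
  refine eq_of_source_eq_of_ne (δ := g β) (hout _).le (by rw [hsf, hsg]) (by rw [hsg, ← hsf, hf3])
    (hfg β) ?_
  simpa [hf3] using (hfg (f (f (g β)))).symm

theorem bar_eq [DecidableEq Q₀] (hout : ∀ v, #(univ.filter fun e => s e = v) = 2)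
    (hfg : ∀ α, f α ≠ g α) (hsf : ∀ α, s (f α) = t α) (hsg : ∀ α, s (g α) = t α)
    (hf3 : ∀ α, f (f (f α)) = α) {bar : Q₁ → Q₁} (hbar_ne : ∀ α, bar α ≠ α)
    (hbar_s : ∀ α, s (bar α) = s α) (β : Q₁) : bar β = g (f (f β)) := by
  refine eq_of_source_eq_of_ne (δ := β) (hout _).le (hbar_s β) (by rw [hsg, ← hsf, hf3])
    (hbar_ne β) ?_
  simpa [hf3] using (hfg (f (f β))).symm

variable {K A : Type} [CommSemiring K] [Ring A] [Algebra K A] {c : Q₁ → K} {x : Q₁ → A}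

theorem x_f_symm_mul_x_f_f_symm (hcg : ∀ α, c (g α) = c α)
    (hrel : ∀ α, x (f α) * x (f (f α)) = c α • gpath x g (g α) (minimalPeriod g α - 1))
    (β : Q₁) :
    x (f (g.symm β)) * x (f (f (g.symm β))) = c β • gpath x g β (minimalPeriod g β - 1) := by
  have hc : c (g.symm β) = c β := by simpa using (hcg (g.symm β)).symm
  have hn := minimalPeriod_apply (g.injective.mem_periodicPts (g.symm β))
  rw [Equiv.apply_symm_apply] at hn
  simpa [hc, hn] using hrel (g.symm β)

theorem x_g_mul_x_f_g [DecidableEq Q₀] (hout : ∀ v, #(univ.filter fun e => s e = v) = 2)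
    (hfg : ∀ α, f α ≠ g α) (hsf : ∀ α, s (f α) = t α) (hsg : ∀ α, s (g α) = t α)
    (hf3 : ∀ α, f (f (f α)) = α) (hcg : ∀ α, c (g α) = c α)
    (hrel : ∀ α, x (f α) * x (f (f α)) = c α • gpath x g (g α) (minimalPeriod g α - 1))
    (α : Q₁) (hn : 3 ≤ minimalPeriod g (f α)) :
    x (g α) * x (f (g α)) =
      c (f α) • (x (f α) * x (g (f α)) * gpath x g (g^[2] (f α)) (minimalPeriod g (f α) - 3)) := by
  have h := x_f_symm_mul_x_f_f_symm hcg hrel (f α)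
  rwa [g_symm_apply_f hout hfg hsf hsg hf3, hf3, show minimalPeriod g (f α) - 1 =
    minimalPeriod g (f α) - 3 + 2 by omega, gpath_add_two'] at h

theorem x_mul_x_f_mul_x_g_f [DecidableEq Q₀] (hout : ∀ v, #(univ.filter fun e => s e = v) = 2)
    (hfg : ∀ α, f α ≠ g α) (hsf : ∀ α, s (f α) = t α) (hsg : ∀ α, s (g α) = t α)
    (hf3 : ∀ α, f (f (f α)) = α) {bar : Q₁ → Q₁} (hbar_ne : ∀ α, bar α ≠ α)
    (hbar_s : ∀ α, s (bar α) = s α) (hcg : ∀ α, c (g α) = c α)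
    (hrel : ∀ α, x (f α) * x (f (f α)) = c α • gpath x g (g α) (minimalPeriod g α - 1))
    (α : Q₁) (hn : 3 ≤ minimalPeriod g (bar α)) :
    x α * x (f α) * x (g (f α)) =
      c (bar α) • gpath x g (bar α) (minimalPeriod g (bar α) - 3) *
        (x (g^[minimalPeriod g (bar α) - 3] (bar α)) *
          x (g (g^[minimalPeriod g (bar α) - 3] (bar α))) *
          x (f (g (g^[minimalPeriod g (bar α) - 3] (bar α))))) := by
  set n := minimalPeriod g (bar α)
  have hsymm : g.symm (bar α) = f (f α) := by
    rw [bar_eq hout hfg hsf hsg hf3 hbar_ne hbar_s, g.symm_apply_apply]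
  have hlast : g (g^[n - 3] (bar α)) = f (f (g (f α))) := by
    rw [← iterate_succ_apply' g, show (n - 3).succ = n - 2 by omega,
      g.iterate_minimalPeriod_sub_apply _ (by omega), iterate_succ_apply, iterate_one, hsymm,
      g_symm_apply_f hout hfg hsf hsg hf3]
  have hxx : x α * x (f α) = c (bar α) • gpath x g (bar α) (n - 1) := by
    simpa only [hsymm, hf3] using x_f_symm_mul_x_f_f_symm hcg hrel (bar α)
  rw [hlast, hf3, hxx, show n - 1 = n - 3 + 2 by omega, gpath_add_two, hlast]
  simp only [smul_mul_assoc, mul_assoc]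

end AdjacencyQuiver

theorem stmt_14_general
  {Q₀ Q₁ : Type} [Fintype Q₁] [DecidableEq Q₀]
  (s t : Q₁ → Q₀)
  (hnoloop : ∀ e : Q₁, s e ≠ t e)
  (hno2cyc : ∀ e e' : Q₁, ¬ (s e = t e' ∧ t e = s e'))
  (hout : ∀ v : Q₀, (Finset.univ.filter fun e => s e = v).card = 2)
  (f g : Q₁ ≃ Q₁)
  (hfg : ∀ α : Q₁, f α ≠ g α)
  (hsf : ∀ α : Q₁, s (f α) = t α)
  (hsg : ∀ α : Q₁, s (g α) = t α)
  (hf3 : ∀ α : Q₁, f (f (f α)) = α)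
  (bar : Q₁ → Q₁)
  (hbar_ne : ∀ α : Q₁, bar α ≠ α)
  (hbar_s : ∀ α : Q₁, s (bar α) = s α)
  {K : Type} [Field K] {A : Type} [Ring A] [Algebra K A]
  (c : Q₁ → K) (hcg : ∀ α : Q₁, c (g α) = c α)
  (x : Q₁ → A)
  (hrel : ∀ α : Q₁, x (f α) * x (f (f α)) =
      c α • gpath x (⇑g) (g α) (Function.minimalPeriod (⇑g) α - 1))
  (hstar : ∀ α : Q₁, 4 ≤ Function.minimalPeriod (⇑g) α ∨ 4 ≤ Function.minimalPeriod (⇑g) (f α)) :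
    ∀ α : Q₁,
      x α * x (g α) * x (f (g α)) =
        x α * x (f α) * x (g (f α)) *
          (c (f α) • gpath x (⇑g) ((⇑g)^[2] (f α)) (Function.minimalPeriod (⇑g) (f α) - 3)) ∧
      x α * x (f α) * x (g (f α)) =
        (c (bar α) • gpath x (⇑g) (bar α) (Function.minimalPeriod (⇑g) (bar α) - 3)) *
          (x ((⇑g)^[Function.minimalPeriod (⇑g) (bar α) - 3] (bar α)) *
           x (g ((⇑g)^[Function.minimalPeriod (⇑g) (bar α) - 3] (bar α))) *
           x (f (g ((⇑g)^[Function.minimalPeriod (⇑g) (bar α) - 3] (bar α))))) ∧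
      1 ≤ (Function.minimalPeriod (⇑g) (bar α) - 3) + (Function.minimalPeriod (⇑g) (f α) - 3) := by
  intro α
  have hn3 := three_le_minimalPeriod_of_no_short_cycles hnoloop hno2cyc hsg
  refine ⟨?_, x_mul_x_f_mul_x_g_f hout hfg hsf hsg hf3 hbar_ne hbar_s hcg hrel α (hn3 _), ?_⟩
  · rw [mul_assoc (x α), x_g_mul_x_f_g hout hfg hsf hsg hf3 hcg hrel α (hn3 _)]
    simp only [mul_smul_comm, mul_assoc]
  · have hbar : minimalPeriod g (bar α) = minimalPeriod g (f (f α)) := by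
      rw [bar_eq hout hfg hsf hsg hf3 hbar_ne hbar_s]
      exact minimalPeriod_apply (g.injective.mem_periodicPts _)
    have := hn3 (bar α)
    have := hn3 (f α)
    rcases hstar (f α) with h | h <;> omega

theorem stmt_14
  {Q₀ Q₁ : Type} [Fintype Q₀] [Fintype Q₁] [DecidableEq Q₀] [DecidableEq Q₁]
  [Nonempty Q₀] [Nonempty Q₁]
  (s t : Q₁ → Q₀)
  (hconn : ∀ u v : Q₀, Relation.EqvGen (fun a b => ∃ e : Q₁, s e = a ∧ t e = b) u v)
  (hnoloop : ∀ e : Q₁, s e ≠ t e)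
  (hno2cyc : ∀ e e' : Q₁, ¬ (s e = t e' ∧ t e = s e'))
  (hout : ∀ v : Q₀, (Finset.univ.filter fun e => s e = v).card = 2)
  (hin : ∀ v : Q₀, (Finset.univ.filter fun e => t e = v).card = 2)
  (f g : Q₁ ≃ Q₁)
  (hfg : ∀ α : Q₁, f α ≠ g α)
  (hsf : ∀ α : Q₁, s (f α) = t α)
  (hsg : ∀ α : Q₁, s (g α) = t α)
  (hf3 : ∀ α : Q₁, f (f (f α)) = α)
  (bar : Q₁ → Q₁)
  (hbar_ne : ∀ α : Q₁, bar α ≠ α)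
  (hbar_s : ∀ α : Q₁, s (bar α) = s α)
  {K : Type} [Field K] {A : Type} [Ring A] [Algebra K A]
  (c : Q₁ → K) (hc0 : ∀ α : Q₁, c α ≠ 0) (hcg : ∀ α : Q₁, c (g α) = c α)
  (x : Q₁ → A)
  (hrel : ∀ α : Q₁, x (f α) * x (f (f α)) =
      c α • gpath x (⇑g) (g α) (Function.minimalPeriod (⇑g) α - 1))
  (hstar : ∀ α : Q₁, 4 ≤ Function.minimalPeriod (⇑g) α ∨ 4 ≤ Function.minimalPeriod (⇑g) (f α)) :
    ∀ α : Q₁,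
      x α * x (g α) * x (f (g α)) =
        x α * x (f α) * x (g (f α)) *
          (c (f α) • gpath x (⇑g) ((⇑g)^[2] (f α)) (Function.minimalPeriod (⇑g) (f α) - 3)) ∧
      x α * x (f α) * x (g (f α)) =
        (c (bar α) • gpath x (⇑g) (bar α) (Function.minimalPeriod (⇑g) (bar α) - 3)) *
          (x ((⇑g)^[Function.minimalPeriod (⇑g) (bar α) - 3] (bar α)) *
           x (g ((⇑g)^[Function.minimalPeriod (⇑g) (bar α) - 3] (bar α))) *
           x (f (g ((⇑g)^[Function.minimalPeriod (⇑g) (bar α) - 3] (bar α))))) ∧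
      1 ≤ (Function.minimalPeriod (⇑g) (bar α) - 3) + (Function.minimalPeriod (⇑g) (f α) - 3) :=
  stmt_14_general s t hnoloop hno2cyc hout f g hfg hsf hsg hf3 bar hbar_ne hbar_s c hcg x hrel hstar
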